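/- Let C be a finite set of candidates, PW = {pw_1,…,pw_l} ⊆ C a nonempty set of possible winners, and P a preference order on C with P(pw_a,pw_b) if and only if a < b. If a preference order P' on C locally dominates P (given PW), then no segment between two consecutive possible winners decreases, i.e. |[pw_a, P', pw_{a+1}]| ≥ |[pw_a, P, pw_{a+1}]| for all a ∈ {1,…,l−1}. -/

import Mathlib

/-- A preference order: a strict total order on candidates. -/
def IsPref {C : Type*} (P : C → C → Prop) : Prop :=
  (∀ a b : C, a ≠ b → P a b ∨ P b a) ∧ (∀ a : C, ¬ P a a) ∧
    ∀ a b c : C, P a b → P b c → P a c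

/-- The Borda score that preference order `P` gives candidate `c`. -/
noncomputable def borda {C : Type*} [Fintype C] (P : C → C → Prop) (c : C) : ℕ :=
  1 + Set.ncard {c' : C | P c c'}

/-- `c` is the outcome `F(s, P)`: it beats every other candidate either in total score
`s + borda`, or on equal total score by the tie-breaking order `tb`. -/
def IsWinner {C : Type*} [Fintype C] (tb : C → C → Prop) (s : C → ℕ)
    (P : C → C → Prop) (c : C) : Prop :=
  ∀ c' : C, c' ≠ c →
    s c' + borda P c' < s c + borda P c ∨
      (s c' + borda P c' = s c + borda P c ∧ tb c c')

/-- `s` is a possible world for the set `PW` of possible winners. -/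
def PossibleWorld {C : Type*} [Fintype C] (tb : C → C → Prop) (PW : Set C)
    (s : C → ℕ) : Prop :=
  ∀ R : C → C → Prop, IsPref R → ∀ c : C, IsWinner tb s R c → c ∈ PW

/-- `P'` locally dominates `P` given the possible-winner set `PW`. -/
def LocDom {C : Type*} [Fintype C] (tb : C → C → Prop) (PW : Set C)
    (P' P : C → C → Prop) : Prop :=
  (∀ s : C → ℕ, PossibleWorld tb PW s →
      ∀ w' w : C, IsWinner tb s P' w' → IsWinner tb s P w → w' = w ∨ P w' w) ∧
  ∃ s : C → ℕ, PossibleWorld tb PW s ∧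
      ∃ w' w : C, IsWinner tb s P' w' ∧ IsWinner tb s P w ∧ P w' w

/-- The (closed) segment `[c, P, c']` of candidates between `c` and `c'`. -/
def seg {C : Type*} (P : C → C → Prop) (c c' : C) : Set C :=
  {d : C | (d = c ∨ P c d) ∧ (d = c' ∨ P d c')}

/-!
If the segment from `x = pw_a` to `y = pw_{a+1}` shrinks from `P` to `P'`, then `P'` shifts
Borda points from `x` to `y` relative to `P`:
`borda P' x - borda P' y < borda P x - borda P y`.
Give `x` and `y` a head start of `|C|` (so that only they can win) and choose the rest of their
scores so that `x` wins under `P` and `y` wins under `P'`. As `P` ranks `x` above `y`, this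
possible world makes the outcome of `P'` strictly worse by `P`, contradicting local dominance.
-/

section Borda

variable {C : Type*} {Q : C → C → Prop}

theorem IsPref.asymm (hQ : IsPref Q) {a b : C} (h : Q a b) : ¬ Q b a :=
  fun h' => hQ.2.1 a (hQ.2.2 a b a h h')

theorem IsPref.notMem_setOf (hQ : IsPref Q) (a : C) : a ∉ {c : C | Q a c} :=
  hQ.2.1 a

theorem insert_setOf_eq_seg_union (hQ : IsPref Q) {a b : C} (hab : Q a b) :
    insert a {c : C | Q a c} = seg Q a b ∪ {c : C | Q b c} := by
  ext c
  simp only [seg, Set.mem_insert_iff, Set.mem_union, Set.mem_ofPred_eq]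
  constructor
  · rintro (rfl | hac)
    · exact Or.inl ⟨Or.inl rfl, Or.inr hab⟩
    · by_cases hcb : c = b
      · exact Or.inl ⟨Or.inr hac, Or.inl hcb⟩
      · rcases hQ.1 c b hcb with hcb | hbc
        · exact Or.inl ⟨Or.inr hac, Or.inr hcb⟩
        · exact Or.inr hbc
  · rintro (⟨rfl | hac, -⟩ | hbc)
    · exact Or.inl rfl
    · exact Or.inr hac
    · exact Or.inr (hQ.2.2 a b c hab hbc)

theorem disjoint_seg_setOf (hQ : IsPref Q) (a b : C) :
    Disjoint (seg Q a b) {c : C | Q b c} := by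
  rw [Set.disjoint_left]
  rintro c ⟨-, rfl | hcb⟩ hbc
  · exact hQ.2.1 c hbc
  · exact hQ.asymm hcb hbc

variable [Fintype C]

theorem one_le_borda (c : C) : 1 ≤ borda Q c :=
  Nat.le_add_right 1 _

theorem borda_le_card (hQ : IsPref Q) (c : C) : borda Q c ≤ Fintype.card C := by
  have hsub : insert c {c' : C | Q c c'} ⊆ Set.univ := Set.subset_univ _
  have hcard := Set.ncard_le_ncard hsub Set.finite_univ
  rw [Set.ncard_insert_of_notMem (hQ.notMem_setOf c) (Set.toFinite _), Set.ncard_univ]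
    at hcard
  simpa [borda, Nat.add_comm] using hcard

theorem borda_add_one_eq (hQ : IsPref Q) {a b : C} (hab : Q a b) :
    borda Q a + 1 = borda Q b + (seg Q a b).ncard := by
  have hcard := congrArg Set.ncard (insert_setOf_eq_seg_union hQ hab)
  rw [Set.ncard_insert_of_notMem (hQ.notMem_setOf a) (Set.toFinite _),
    Set.ncard_union_eq (disjoint_seg_setOf hQ a b) (Set.toFinite _) (Set.toFinite _)] at hcard
  simp only [borda]
  omega

theorem borda_lt_borda (hQ : IsPref Q) {a b : C} (hba : Q b a) : borda Q a < borda Q b := by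
  have hsub : insert a {c : C | Q a c} ⊆ {c : C | Q b c} := by
    rintro c (rfl | hac)
    · exact hba
    · exact hQ.2.2 b a c hba hac
  have hcard := Set.ncard_le_ncard hsub (Set.toFinite _)
  rw [Set.ncard_insert_of_notMem (hQ.notMem_setOf a) (Set.toFinite _)] at hcard
  simp only [borda]
  omega

theorem borda_add_one_le (hQ : IsPref Q) {a b : C} (hab : a ≠ b) :
    borda Q a + 1 ≤ borda Q b + (seg Q a b).ncard := by
  rcases hQ.1 a b hab with h | h
  · exact (borda_add_one_eq hQ h).le
  · have := borda_lt_borda hQ h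
    omega

end Borda

section Worlds

variable {C : Type*} [Fintype C] {tb : C → C → Prop} {s : C → ℕ}

theorem possibleWorld_of_card_le {PW : Set C} {x : C} (hx : x ∈ PW)
    (hsx : Fintype.card C ≤ s x) (hs : ∀ c ∉ PW, s c = 0) : PossibleWorld tb PW s := by
  intro R hR c hc
  by_contra hcPW
  have hxc : x ≠ c := by rintro rfl; exact hcPW hx
  have hle : s x + borda R x ≤ s c + borda R c := by
    rcases hc x hxc with h | h <;> omega
  have := borda_le_card hR c
  have := one_le_borda (Q := R) x
  rw [hs c hcPW] at hle
  omega

theorem isWinner_of_only_rival {Q : C → C → Prop} (hQ : IsPref Q) {c d : C}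
    (hc : Fintype.card C ≤ s c) (hs : ∀ c', c' ≠ c → c' ≠ d → s c' = 0)
    (hd : s d + borda Q d < s c + borda Q c ∨
      (s d + borda Q d = s c + borda Q c ∧ tb c d)) :
    IsWinner tb s Q c := by
  intro c' hc'c
  by_cases hc'd : c' = d
  · exact hc'd ▸ hd
  · left
    have := borda_le_card hQ c'
    have := one_le_borda (Q := Q) c
    rw [hs c' hc'c hc'd]
    omega

/-- The scores are `s x = |C| + borda P y + e` and `s y = |C| + borda P x`, with `e ∈ {0, 1}`
chosen so that the tie-breaking order settles the one tie that occurs. -/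
theorem exists_possibleWorld_isWinner_isWinner (htb : IsPref tb) {PW : Set C} {x y : C}
    (hx : x ∈ PW) (hy : y ∈ PW) {P P' : C → C → Prop} (hP : IsPref P) (hP' : IsPref P')
    (hshift : borda P' x + borda P y < borda P x + borda P' y) :
    ∃ s, PossibleWorld tb PW s ∧ IsWinner tb s P x ∧ IsWinner tb s P' y := by
  classical
  have hxy : x ≠ y := by rintro rfl; omega
  let e := if tb x y then 0 else 1
  let s : C → ℕ := fun c =>
    if c = x then Fintype.card C + borda P y + e
    else if c = y then Fintype.card C + borda P x else 0
  have hsx : s x = Fintype.card C + borda P y + e := if_pos rfl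
  have hsy : s y = Fintype.card C + borda P x := by simp [s, hxy.symm]
  have hs : ∀ c, c ≠ x → c ≠ y → s c = 0 := fun c hcx hcy => by simp [s, hcx, hcy]
  have he : tb x y ∧ e = 0 ∨ ¬ tb x y ∧ e = 1 := by
    by_cases h : tb x y <;> simp [e, h]
  refine ⟨s, possibleWorld_of_card_le hx (by rw [hsx]; omega) fun c hc => ?_, ?_, ?_⟩
  · exact hs c (fun h => hc (h ▸ hx)) (fun h => hc (h ▸ hy))
  · refine isWinner_of_only_rival hP (by rw [hsx]; omega) hs ?_
    rw [hsx, hsy]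
    rcases he with ⟨htb_xy, he⟩ | ⟨-, he⟩
    · exact Or.inr ⟨by omega, htb_xy⟩
    · exact Or.inl (by omega)
  · refine isWinner_of_only_rival hP' (by rw [hsy]; omega) (fun c h1 h2 => hs c h2 h1) ?_
    rw [hsx, hsy]
    rcases he with ⟨-, he⟩ | ⟨htb_xy, he⟩
    · exact Or.inl (by omega)
    · have htb_yx : tb y x := (htb.1 x y hxy).resolve_left htb_xy
      exact (Nat.lt_or_eq_of_le (by omega)).imp id fun heq => ⟨heq, htb_yx⟩

end Worlds

theorem statement2 {C : Type*} [Fintype C]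
    (tb : C → C → Prop) (htb : IsPref tb)
    (l : ℕ) (pw : Fin l → C)
    (P P' : C → C → Prop) (hP : IsPref P) (hP' : IsPref P')
    (horder : ∀ a b : Fin l, P (pw a) (pw b) ↔ a < b)
    (hdom : LocDom tb (Set.range pw) P' P) :
    ∀ a : ℕ, ∀ h : a + 1 < l,
      (seg P (pw ⟨a, by omega⟩) (pw ⟨a + 1, h⟩)).ncard ≤
        (seg P' (pw ⟨a, by omega⟩) (pw ⟨a + 1, h⟩)).ncard := by
  intro a h
  by_contra! hshrink
  set x := pw ⟨a, by omega⟩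
  set y := pw ⟨a + 1, h⟩
  have hPxy : P x y := (horder _ _).2 (Fin.mk_lt_mk.2 (Nat.lt_succ_self a))
  have hxy : x ≠ y := fun e => hP.2.1 x (e ▸ hPxy)
  have hshift : borda P' x + borda P y < borda P x + borda P' y := by
    have := borda_add_one_eq hP hPxy
    have := borda_add_one_le hP' hxy
    omega
  obtain ⟨s, hs, hxP, hyP'⟩ := exists_possibleWorld_isWinner_isWinner htb
    (Set.mem_range_self _) (Set.mem_range_self _) hP hP' hshift
  rcases hdom.1 s hs y x hyP' hxP with hyx | hPyx
  · exact hxy hyx.symm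
  · exact hP.asymm hPxy hPyx
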